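/- arXiv:2510.02430 — 8 statements merged into one kernel-verified Lean document; each statement's English description precedes it below -/
import Mathlib

section
/- Let N ∈ ℕ and let u be an (N+1)×(N+1) complex matrix with rows and columns indexed by {0,1,…,N}, and assume u₀₀ ≠ 0. For each n ∈ ℕ let α(n) = (1/n!) · per(Mₙ), where Mₙ is the (n+N)×(n+N) complex matrix obtained from u by repeating row 0 and column 0 exactly n times (i.e. Mₙ(i,j) = u(rₙ(i), rₙ(j)) where rₙ sends the first n indices to 0 and the remaining N indices to 1,…,N in order). Then there exists a polynomial P ∈ ℂ[X] with deg P ≤ N such that α(n) = (u₀₀)ⁿ · P(n) for every n ∈ ℕ. -/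
open scoped BigOperators

/-- The permanent of a square matrix. -/
noncomputable def perMatrix {ι : Type*} [Fintype ι] [DecidableEq ι] (M : Matrix ι ι ℂ) : ℂ :=
  ∑ σ : Equiv.Perm ι, ∏ i, M i (σ i)

/-- The reindexing map sending the first `n` indices of `Fin (n + N)` to `0 : Fin (N+1)`
and the remaining `N` indices to `1, …, N` in order. -/
def reindexMap (N n : ℕ) (i : Fin (n + N)) : Fin (N + 1) :=
  if h : (i : ℕ) < n then 0 else ⟨(i : ℕ) - n + 1, by have := i.isLt; omega⟩

open Finset Function Equiv Sum Polynomial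
open scoped Nat

/-!
Write `Fin (n + N)` as `Fin n ⊕ Fin N`, with the `n` copies of the index `0` on the left, and
expand the permanent as `∑ τ, ∏ j, M (τ j) j`. The term of `τ` depends only on its pattern
`p = τ.rightPattern`: for each of the last `N` columns, the row among the last `N` that `τ`
assigns to it, or `none` if it gets a copy of row `0`. If `p` has `k` entries `none`, then `k` of
the copies of column `0` get one of the last `N` rows, the other `n - k` get copies of row `0`, and
the term is `u₀₀ ^ (n - k) * wₚ` (`patternWeight`). The pattern is realised by
`n! * n (n - 1) ⋯ (n - k + 1)` permutations: an injection of those `k` columns into the copies of row `0`, then a bijection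
between the remaining `n` rows and the copies of column `0`. Hence
`α(n) = ∑ₚ (n)ₖ u₀₀ ^ (n - k) wₚ = u₀₀ ^ n ∑ₚ u₀₀ ^ (-k) wₚ (n)ₖ`, and the falling factorial `(n)ₖ`
is a polynomial of degree `k ≤ N` in `n`.
-/

theorem Matrix.permanent_submatrix_equiv_self {m n R : Type*} [Fintype m] [Fintype n]
    [DecidableEq m] [DecidableEq n] [CommSemiring R] (e : m ≃ n) (A : Matrix n n R) :
    (A.submatrix e e).permanent = A.permanent :=
  Fintype.sum_equiv (Equiv.permCongr e) _ _ fun σ =>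
    Fintype.prod_equiv e _ _ fun i => by simp [Equiv.permCongr_apply]

theorem perMatrix_eq_permanent {ι : Type*} [Fintype ι] [DecidableEq ι] (M : Matrix ι ι ℂ) :
    perMatrix M = M.permanent := by
  rw [← Matrix.permanent_transpose]
  rfl

theorem reindexMap_eq_sumElim_comp (N n : ℕ) :
    reindexMap N n = Sum.elim (fun _ : Fin n => 0) Fin.succ ∘ finSumFinEquiv.symm := by
  funext i
  refine Fin.addCases (fun a => ?_) (fun c => ?_) i
  · simp [reindexMap]
  · simp [reindexMap, Fin.ext_iff]

theorem exists_degree_le_sum_descFactorial_mul_pow_eq {K ι : Type*} [Field K] (s : Finset ι)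
    (k : ι → ℕ) (c : ι → K) {a : K} (ha : a ≠ 0) {N : ℕ} (hk : ∀ i ∈ s, k i ≤ N) :
    ∃ P : K[X], P.degree ≤ N ∧ ∀ n : ℕ,
      ∑ i ∈ s, (n.descFactorial (k i) : K) * (a ^ (n - k i) * c i) = a ^ n * P.eval (n : K) := by
  refine ⟨∑ i ∈ s, (c i * a⁻¹ ^ k i) • descPochhammer K (k i), ?_, fun n => ?_⟩
  · rw [← mem_degreeLE]
    refine Submodule.sum_mem _ fun i hi => Submodule.smul_mem _ _ ?_
    rw [mem_degreeLE]
    refine degree_le_natDegree.trans ?_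
    rw [descPochhammer_natDegree]
    exact_mod_cast hk i hi
  · simp only [eval_finsetSum, eval_smul, descPochhammer_eval_eq_descFactorial, smul_eq_mul,
      Finset.mul_sum]
    refine sum_congr rfl fun i _ => ?_
    rcases le_or_gt (k i) n with hkn | hkn
    · rw [pow_sub₀ _ ha hkn, inv_pow]
      ring
    · simp [Nat.descFactorial_eq_zero_iff_lt.mpr hkn]

theorem Sum.elim_const_eq_getRight?_elim {α β ι : Type*} (i₀ : ι) (s : β → ι) (x : α ⊕ β) :
    Sum.elim (fun _ => i₀) s x = x.getRight?.elim i₀ s := by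
  cases x <;> rfl

section Pattern

variable {α β : Type*}

def IsPartialInj (p : β → Option β) : Prop :=
  ∀ ⦃c c' b⦄, p c = some b → p c' = some b → c = c'

def fillPattern (p : β → Option β) (e : {c // p c = none} → α) (c : β) : α ⊕ β :=
  if h : p c = none then inl (e ⟨c, h⟩) else inr ((p c).get (Option.isSome_iff_ne_none.2 h))

theorem fillPattern_of_eq_none {p : β → Option β} (e : {c // p c = none} → α) {c : β}
    (h : p c = none) : fillPattern p e c = inl (e ⟨c, h⟩) :=
  dif_pos h

theorem fillPattern_of_eq_some {p : β → Option β} (e : {c // p c = none} → α) {c b : β}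
    (h : p c = some b) : fillPattern p e c = inr b := by
  simp [fillPattern, h]

theorem getRight?_comp_fillPattern (p : β → Option β) (e : {c // p c = none} → α) :
    getRight? ∘ fillPattern p e = p := by
  funext c
  rcases h : p c with _ | b
  · simp [fillPattern_of_eq_none e h]
  · simp [fillPattern_of_eq_some e h]

theorem fillPattern_injective (p : β → Option β) : Injective (fillPattern (α := α) p) :=
  fun e e' h => funext fun c => by simpa [fillPattern_of_eq_none _ c.2] using congrFun h c

theorem Function.Injective.fillPattern {p : β → Option β} {e : {c // p c = none} → α}
    (he : Injective e) (hp : IsPartialInj p) : Injective (fillPattern p e) := by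
  intro c c' h
  rcases hc : p c with _ | b <;> rcases hc' : p c' with _ | b'
  · rw [fillPattern_of_eq_none e hc, fillPattern_of_eq_none e hc', inl.injEq] at h
    exact congrArg Subtype.val (he h)
  · rw [fillPattern_of_eq_none e hc, fillPattern_of_eq_some e hc'] at h
    exact (inl_ne_inr h).elim
  · rw [fillPattern_of_eq_some e hc, fillPattern_of_eq_none e hc'] at h
    exact (inr_ne_inl h).elim
  · rw [fillPattern_of_eq_some e hc, fillPattern_of_eq_some e hc', inr.injEq] at h
    exact hp hc (h ▸ hc')

variable [Fintype β]

def numNone (p : β → Option β) : ℕ := #{c | p c = none}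

theorem numNone_le_card (p : β → Option β) : numNone p ≤ Fintype.card β :=
  card_filter_le _ _

instance [DecidableEq β] : DecidablePred (IsPartialInj (β := β)) := fun p => by
  unfold IsPartialInj; infer_instance

variable [Fintype α] [DecidableEq α] [DecidableEq β]

theorem card_filter_injective_getRight?_comp_eq {p : β → Option β} (hp : IsPartialInj p) :
    #{f : β → α ⊕ β | Injective f ∧ getRight? ∘ f = p}
      = (Fintype.card α).descFactorial (numNone p) := by
  have himage : ({f : β → α ⊕ β | Injective f ∧ getRight? ∘ f = p} : Finset _)
      = univ.map ⟨fun e : {c // p c = none} ↪ α => fillPattern p e,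
          (fillPattern_injective p).comp DFunLike.coe_injective⟩ := by
    ext f
    simp only [mem_filter, mem_univ, true_and, mem_map, Function.Embedding.coeFn_mk]
    constructor
    · rintro ⟨hf, hfp⟩
      have hleft (c : {c // p c = none}) : (f c).isLeft :=
        getRight?_eq_none_iff.mp ((congrFun hfp c).trans c.2)
      refine ⟨⟨fun c => (f c).getLeft (hleft c), fun c c' h => Subtype.ext (hf ?_)⟩, ?_⟩
      · rw [← inl_getLeft _ (hleft c), ← inl_getLeft _ (hleft c')]
        exact congrArg inl h
      · funext c
        rcases hc : p c with _ | b
        · rw [fillPattern_of_eq_none _ hc]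
          exact inl_getLeft _ _
        · rw [fillPattern_of_eq_some _ hc]
          exact (getRight?_eq_some_iff.mp ((congrFun hfp c).trans hc)).symm
    · rintro ⟨e, rfl⟩
      exact ⟨e.injective.fillPattern hp, getRight?_comp_fillPattern p e⟩
  rw [himage, card_map, card_univ, Fintype.card_embedding_eq, Fintype.card_subtype]
  rfl

end Pattern

namespace Equiv.Perm

variable {α β : Type*}

def rightPattern (τ : Perm (α ⊕ β)) (c : β) : Option β := (τ (inr c)).getRight?

theorem isPartialInj_rightPattern (τ : Perm (α ⊕ β)) : IsPartialInj (rightPattern τ) := by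
  intro c c' b hc hc'
  rw [rightPattern, getRight?_eq_some_iff] at hc hc'
  simpa using τ.injective (hc.trans hc'.symm)

variable [Fintype α] [Fintype β]

theorem card_filter_isLeft_add_numNone_rightPattern (τ : Perm (α ⊕ β)) :
    #{a | (τ (inl a)).isLeft} + numNone (rightPattern τ) = Fintype.card α := by
  have hτ : #{x | (τ x).isLeft} = #{x : α ⊕ β | x.isLeft} :=
    card_equiv τ fun x => by simp
  simp only [card_filter, Fintype.sum_sum_type, isLeft_inl, isLeft_inr] at hτ
  simp only [numNone, rightPattern, getRight?_eq_none_iff, card_filter]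
  rw [hτ]
  simp

variable [DecidableEq α] [DecidableEq β]

theorem prod_filter_not_isLeft_comp_inl {M : Type*} [CommMonoid M] (τ : Perm (α ⊕ β))
    (g : α ⊕ β → M) :
    ∏ a with ¬(τ (inl a)).isLeft, g (τ (inl a)) = ∏ b with ∀ c, τ (inr c) ≠ inr b, g (inr b) := by
  rw [← prod_image (f := g) fun a _ a' _ h => inl_injective (τ.injective h),
    ← prod_image (f := g) fun b _ b' _ h => inr_injective h]
  congr 1
  ext y
  simp only [mem_image, mem_filter, mem_univ, true_and]
  constructor
  · rintro ⟨a, ha, rfl⟩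
    obtain ⟨b, hb⟩ := isRight_iff.mp (not_isLeft.mp ha)
    refine ⟨b, fun c hc => ?_, hb.symm⟩
    simpa using τ.injective (hc.trans hb.symm)
  · rintro ⟨b, hb, rfl⟩
    rcases hx : τ.symm (inr b) with a | c
    · refine ⟨a, ?_, ?_⟩ <;> simp [← hx]
    · exact absurd (by simp [← hx]) (hb c)

theorem card_filter_comp_inr_eq {f : β → α ⊕ β} (hf : Injective f) :
    #{τ : Perm (α ⊕ β) | ⇑τ ∘ inr = f} = (Fintype.card α)! := by
  obtain ⟨ρ, hρ⟩ := Perm.exists_extending_pair inr f inr_injective hf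
  have hshift : #{τ : Perm (α ⊕ β) | ⇑τ ∘ inr = f} = #{τ : Perm (α ⊕ β) | ⇑τ ∘ inr = inr} :=
    card_equiv (Equiv.mulLeft ρ⁻¹) fun τ => by
      simp [funext_iff, ← hρ, Equiv.symm_apply_eq]
  have hfix (τ : Perm (α ⊕ β)) : ⇑τ ∘ inr = inr ↔ ∀ x, ¬x.isLeft → τ x = x := by
    simp [funext_iff, Sum.forall]
  rw [hshift, filter_congr fun τ _ => hfix τ, ← Fintype.card_subtype,
    ← Fintype.card_congr (Perm.subtypeEquivSubtypePerm _), Fintype.card_perm,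
    Fintype.card_congr sumIsLeft]

theorem card_filter_rightPattern_eq {p : β → Option β} (hp : IsPartialInj p) :
    #{τ : Perm (α ⊕ β) | rightPattern τ = p}
      = (Fintype.card α)! * (Fintype.card α).descFactorial (numNone p) := by
  rw [card_eq_sum_card_fiberwise (s := {τ : Perm (α ⊕ β) | rightPattern τ = p})
    (f := fun τ : Perm (α ⊕ β) => ⇑τ ∘ inr)
    (t := {f : β → α ⊕ β | Injective f ∧ getRight? ∘ f = p}) fun τ hτ =>
      mem_filter.mpr ⟨mem_univ _, τ.injective.comp inr_injective, (mem_filter.mp hτ).2⟩]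
  rw [sum_congr rfl fun f hf => ?_, sum_const, card_filter_injective_getRight?_comp_eq hp,
    smul_eq_mul, mul_comm]
  rw [filter_filter, ← card_filter_comp_inr_eq (mem_filter.mp hf).2.1]
  congr 1
  refine filter_congr fun τ _ => and_iff_right_of_imp fun hτ => ?_
  rw [← (mem_filter.mp hf).2.2, ← hτ]
  rfl

end Equiv.Perm

namespace Matrix

variable {α β ι R : Type*} [Fintype α] [Fintype β] [DecidableEq α] [DecidableEq β]
  [CommSemiring R] (u : Matrix ι ι R) (i₀ : ι) (s : β → ι)

def patternWeight (p : β → Option β) : R :=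
  (∏ c, u ((p c).elim i₀ s) (s c)) * ∏ b with ∀ c, p c ≠ some b, u (s b) i₀

theorem prod_submatrix_sumElim_const_apply (τ : Perm (α ⊕ β)) :
    ∏ j, u.submatrix (Sum.elim (fun _ => i₀) s) (Sum.elim (fun _ => i₀) s) (τ j) j
      = u i₀ i₀ ^ (Fintype.card α - numNone τ.rightPattern)
        * patternWeight u i₀ s τ.rightPattern := by
  have hleft : ∏ a with (τ (inl a)).isLeft, u (Sum.elim (fun _ => i₀) s (τ (inl a))) i₀
      = u i₀ i₀ ^ (Fintype.card α - numNone τ.rightPattern) := by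
    rw [prod_congr rfl fun a ha => ?_, prod_const,
      ← τ.card_filter_isLeft_add_numNone_rightPattern, Nat.add_sub_cancel]
    obtain ⟨a', ha'⟩ := isLeft_iff.mp (mem_filter.mp ha).2
    rw [ha', elim_inl]
  have hright : ∏ a with ¬(τ (inl a)).isLeft, u (Sum.elim (fun _ => i₀) s (τ (inl a))) i₀
      = ∏ b with ∀ c, τ.rightPattern c ≠ some b, u (s b) i₀ := by
    rw [τ.prod_filter_not_isLeft_comp_inl (fun y => u (Sum.elim (fun _ => i₀) s y) i₀)]
    simp [Perm.rightPattern]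
  simp only [Fintype.prod_sum_type, submatrix_apply, elim_inl, elim_inr]
  rw [← prod_filter_mul_prod_filter_not univ (fun a => (τ (inl a)).isLeft), hleft, hright,
    patternWeight]
  simp only [Sum.elim_const_eq_getRight?_elim, Perm.rightPattern]
  ring

theorem permanent_submatrix_sumElim_const :
    (u.submatrix (Sum.elim (fun _ : α => i₀) s) (Sum.elim (fun _ => i₀) s)).permanent
      = (Fintype.card α)! * ∑ p with IsPartialInj p,
          ((Fintype.card α).descFactorial (numNone p) : R)
            * (u i₀ i₀ ^ (Fintype.card α - numNone p) * patternWeight u i₀ s p) := by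
  simp only [permanent, prod_submatrix_sumElim_const_apply]
  rw [← sum_fiberwise_of_maps_to (g := Perm.rightPattern) (t := {p | IsPartialInj p})
    fun τ _ => by simpa using τ.isPartialInj_rightPattern, mul_sum]
  refine sum_congr rfl fun p hp => ?_
  rw [sum_congr rfl fun τ hτ => by rw [(mem_filter.mp hτ).2], sum_const,
    Perm.card_filter_rightPattern_eq (mem_filter.mp hp).2, nsmul_eq_mul]
  push_cast
  ring

end Matrix

/-- Theorem 1 (measurement-induced non-linearities): the eigenvalues
`α(n) = (1/n!) · per(u[vₙ|vₙ])` equal `u₀₀ⁿ` times a polynomial of degree at most `N` in `n`. -/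
theorem stmt0 (N : ℕ) (u : Matrix (Fin (N + 1)) (Fin (N + 1)) ℂ) (hu : u 0 0 ≠ 0) :
    ∃ P : Polynomial ℂ, P.degree ≤ N ∧ ∀ n : ℕ,
      (1 / (n.factorial : ℂ)) *
          perMatrix (fun i j : Fin (n + N) => u (reindexMap N n i) (reindexMap N n j))
        = (u 0 0) ^ n * P.eval (n : ℂ) := by
  obtain ⟨P, hdeg, hP⟩ := exists_degree_le_sum_descFactorial_mul_pow_eq
    {p : Fin N → Option (Fin N) | IsPartialInj p} numNone (Matrix.patternWeight u 0 Fin.succ) hu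
    fun p _ => (numNone_le_card p).trans_eq (Fintype.card_fin N)
  refine ⟨P, hdeg, fun n => ?_⟩
  have hsplit : perMatrix (fun i j : Fin (n + N) => u (reindexMap N n i) (reindexMap N n j))
      = (u.submatrix (Sum.elim (fun _ : Fin n => 0) Fin.succ)
          (Sum.elim (fun _ => 0) Fin.succ)).permanent := by
    refine (perMatrix_eq_permanent (u.submatrix (reindexMap N n) (reindexMap N n))).trans ?_
    rw [reindexMap_eq_sumElim_comp, ← Matrix.submatrix_submatrix]
    exact Matrix.permanent_submatrix_equiv_self finSumFinEquiv.symm _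
  rw [hsplit, Matrix.permanent_submatrix_sumElim_const, Fintype.card_fin, ← hP, one_div,
    inv_mul_cancel_left₀ (by exact_mod_cast n.factorial_ne_zero)]
end

section
/- Let n, M ∈ ℕ, let d : Fin M → ℕ satisfy d(p) ≤ n for all p, let W and V be M×M complex matrices, let E : Fin M → ℝ, and fix an index q₀ ∈ Fin M. For x ∈ ℝ let D(x) be the M×M diagonal matrix with diagonal entries e^{i·d(p)·x}, and define f(x) = Σ_{p} E(p) · |(W · D(x) · V)(p, q₀)|². Then there exist complex coefficients c_k for −n ≤ k ≤ n such that f(x) = Σ_{k=−n}^{n} c_k · e^{i k x} for all x ∈ ℝ. -/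
/-!
Writing `a r = W p r * V r q₀`, the amplitude is `∑ r, a r * e^{i d(r) x}`, so its squared modulus
is `∑ r, ∑ s, a r * conj (a s) * e^{i (d(r) - d(s)) x}`. Every frequency `d(r) - d(s)` lies in
`[-n, n]`, and trigonometric polynomials of degree at most `n` form a complex vector space.
-/

open Complex ComplexConjugate Finset

noncomputable def fourierMode (k : ℤ) (x : ℝ) : ℂ := exp (I * k * x)

lemma fourierMode_add (j k : ℤ) (x : ℝ) :
    fourierMode (j + k) x = fourierMode j x * fourierMode k x := by
  simp only [fourierMode, ← exp_add]
  push_cast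
  ring_nf

lemma conj_fourierMode (k : ℤ) (x : ℝ) : conj (fourierMode k x) = fourierMode (-k) x := by
  simp only [fourierMode, ← exp_conj, map_mul, conj_I, map_intCast, conj_ofReal]
  push_cast
  ring_nf

def trigPolyDegreeLE (n : ℕ) : Submodule ℂ (ℝ → ℂ) where
  carrier := {f | ∃ c : ℤ → ℂ, ∀ x, f x = ∑ k ∈ Icc (-(n : ℤ)) n, c k * fourierMode k x}
  zero_mem' := ⟨0, by simp⟩
  add_mem' := by
    rintro f g ⟨c, hc⟩ ⟨c', hc'⟩
    exact ⟨c + c', fun x => by simp [hc, hc', add_mul, sum_add_distrib]⟩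
  smul_mem' := by
    rintro a f ⟨c, hc⟩
    exact ⟨a • c, fun x => by simp [hc, mul_sum, mul_assoc]⟩

lemma fourierMode_mem_trigPolyDegreeLE {n : ℕ} {k : ℤ} (hk : k ∈ Icc (-(n : ℤ)) n) :
    fourierMode k ∈ trigPolyDegreeLE n :=
  ⟨fun j => if j = k then 1 else 0, fun x => by simp [ite_mul, hk]⟩

lemma ofReal_sq_norm_sum_mul_fourierMode {ι : Type*} [Fintype ι] (b : ι → ℂ) (d : ι → ℤ)
    (x : ℝ) :
    ((‖∑ r, b r * fourierMode (d r) x‖ ^ 2 : ℝ) : ℂ)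
      = ∑ r, ∑ s, (b r * conj (b s)) • fourierMode (d r - d s) x := by
  rw [ofReal_pow, ← mul_conj', map_sum, sum_mul_sum]
  refine sum_congr rfl fun r _ => sum_congr rfl fun s _ => ?_
  rw [map_mul, conj_fourierMode, sub_eq_add_neg, fourierMode_add, smul_eq_mul]
  ring

lemma Matrix.mul_diagonal_mul_apply {l m n α : Type*} [Fintype m] [DecidableEq m]
    [CommSemiring α] (A : Matrix l m α) (φ : m → α) (B : Matrix m n α) (i : l) (j : n) :
    (A * Matrix.diagonal φ * B) i j = ∑ r, A i r * B r j * φ r := by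
  rw [Matrix.mul_apply]
  simp only [Matrix.mul_diagonal]
  exact sum_congr rfl fun r _ => by ring

/-- The bosonic cost landscape (Eq. 8 / Appendix B): varying a single phase shifter whose
occupations are at most `n` produces a trigonometric polynomial of degree at most `n`. -/
theorem stmt2 (n M : ℕ) (d : Fin M → ℕ) (hd : ∀ p, d p ≤ n)
    (W V : Matrix (Fin M) (Fin M) ℂ) (E : Fin M → ℝ) (q₀ : Fin M) :
    ∃ c : ℤ → ℂ, ∀ x : ℝ,
      ((∑ p, E p *
          (‖((W * Matrix.diagonal
              (fun p : Fin M => Complex.exp (Complex.I * (d p : ℂ) * (x : ℂ))) * V) p q₀)‖) ^ 2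
        : ℝ) : ℂ)
        = ∑ k ∈ Finset.Icc (-(n : ℤ)) (n : ℤ),
            c k * Complex.exp (Complex.I * (k : ℂ) * (x : ℂ)) := by
  set a : Fin M → Fin M → ℂ := fun p r => W p r * V r q₀
  have hfreq : ∀ r s, (d r : ℤ) - d s ∈ Icc (-(n : ℤ)) n := fun r s => by
    have := hd r; have := hd s
    simp only [mem_Icc]; omega
  obtain ⟨c, hc⟩ : (∑ p, ∑ r, ∑ s, (E p * (a p r * conj (a p s))) •
      fourierMode ((d r : ℤ) - d s)) ∈ trigPolyDegreeLE n :=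
    sum_mem fun p _ => sum_mem fun r _ => sum_mem fun s _ =>
      Submodule.smul_mem _ _ (fourierMode_mem_trigPolyDegreeLE (hfreq r s))
  refine ⟨c, fun x => ?_⟩
  have hamp : ∀ p, (W * Matrix.diagonal
      (fun p : Fin M => exp (I * (d p : ℂ) * (x : ℂ))) * V) p q₀
        = ∑ r, a p r * fourierMode (d r) x := fun p => by
    simp [Matrix.mul_diagonal_mul_apply, a, fourierMode]
  change _ = ∑ k ∈ Icc _ _, c k * fourierMode k x
  rw [← hc x]
  simp only [hamp, ofReal_sum, ofReal_mul, ofReal_sq_norm_sum_mul_fourierMode]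
  simp only [mul_sum, Finset.sum_apply, Pi.smul_apply, smul_eq_mul, mul_assoc]
end

section
/- Let M ∈ ℕ, let a, b ∈ ℝ, let d : Fin M → ℝ satisfy d(p) = a or d(p) = b for every p, let W and V be M×M complex matrices, let E : Fin M → ℝ, and fix an index q₀ ∈ Fin M. For x ∈ ℝ let D(x) be the M×M diagonal matrix with diagonal entries e^{i·d(p)·x}, and define f(x) = Σ_{p} E(p) · |(W · D(x) · V)(p, q₀)|². Then there exist A, B, φ ∈ ℝ such that f(x) = A·sin(|a−b|·x − φ) + B for all x ∈ ℝ. -/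
/-!
Grouping the middle index of `W * D(x) * V` by the value of `d` writes each entry as
`e^{iax} u + e^{ibx} v`, whose squared modulus is `|u|² + |v|² + 2 Re(u v̄ e^{i(a-b)x})`.
The cost is therefore a constant plus `Re(z e^{i(a-b)x}) = |z| cos((a - b)x + arg z)`;
since `Re(z e^{iθ}) = Re(z̄ e^{-iθ})`, replacing `z` by `z̄` turns the frequency `a - b`
into `|a - b|`.
-/

open Complex ComplexConjugate Finset

lemma mul_diagonal_mul_apply_of_two_valued {n α R : Type*} [Fintype n] [DecidableEq n]
    [DecidableEq α] [CommSemiring R] (W V : Matrix n n R) (d : n → α) (f : α → R) {a b : α}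
    (hd : ∀ k, d k = a ∨ d k = b) (p q : n) :
    (W * Matrix.diagonal (fun k => f (d k)) * V) p q =
      f a * ∑ k with d k = a, W p k * V k q + f b * ∑ k with d k ≠ a, W p k * V k q := by
  rw [Matrix.mul_apply, ← sum_filter_add_sum_filter_not _ (fun k => d k = a), mul_sum, mul_sum]
  congr 1 <;> refine sum_congr rfl fun k hk => ?_ <;> rw [mem_filter] at hk
  · rw [Matrix.mul_diagonal, hk.2]; ring
  · rw [Matrix.mul_diagonal, (hd k).resolve_left hk.2]; ring

lemma re_mul_exp_ofReal_mul_I (z : ℂ) (θ : ℝ) :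
    (z * exp (θ * I)).re = ‖z‖ * Real.cos (θ + arg z) := by
  conv_lhs => rw [← norm_mul_exp_arg_mul_I z, mul_assoc, ← exp_add, ← add_mul, ← ofReal_add,
    add_comm, re_ofReal_mul, exp_ofReal_mul_I_re]

lemma exists_re_mul_exp_eq_mul_sin_abs (z : ℂ) (ω : ℝ) :
    ∃ A φ : ℝ, ∀ x : ℝ, (z * exp (↑(ω * x) * I)).re = A * Real.sin (|ω| * x - φ) := by
  obtain ⟨w, hw⟩ : ∃ w : ℂ, ∀ x : ℝ,
      (z * exp (↑(ω * x) * I)).re = (w * exp (↑(|ω| * x) * I)).re := by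
    rcases abs_choice ω with h | h
    · exact ⟨z, fun x => by rw [h]⟩
    · refine ⟨conj z, fun x => ?_⟩
      rw [← conj_re, map_mul, ← exp_conj, map_mul, conj_ofReal, conj_I, h]
      push_cast; ring_nf
  refine ⟨‖w‖, -arg w - Real.pi / 2, fun x => ?_⟩
  rw [hw, re_mul_exp_ofReal_mul_I, ← Real.sin_add_pi_div_two]
  ring_nf

lemma sq_norm_exp_mul_add_exp_mul (θ₁ θ₂ : ℝ) (u v : ℂ) :
    ‖exp (θ₁ * I) * u + exp (θ₂ * I) * v‖ ^ 2 =
      ‖u‖ ^ 2 + ‖v‖ ^ 2 + 2 * (u * conj v * exp (↑(θ₁ - θ₂) * I)).re := by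
  have hphase : exp (↑(θ₁ - θ₂) * I) = exp (θ₁ * I) * exp (θ₂ * -I) := by
    rw [← exp_add]; push_cast; ring_nf
  have hcross : exp (θ₁ * I) * u * conj (exp (θ₂ * I) * v) =
      u * conj v * exp (↑(θ₁ - θ₂) * I) := by
    rw [map_mul, ← exp_conj, map_mul, conj_ofReal, conj_I, hphase]
    ring
  rw [Complex.sq_norm, normSq_add, hcross, normSq_mul, normSq_mul, ← Complex.sq_norm,
    ← Complex.sq_norm, ← Complex.sq_norm, ← Complex.sq_norm, norm_exp_ofReal_mul_I,
    norm_exp_ofReal_mul_I]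
  ring

/-- The fermionic / dual-valued cost landscape (Eq. 11 / Appendix B): if the varied phase
shifter is dual-valued (eigenvalues `a` or `b`), the cost function is a single sinusoid
of frequency `|a − b|`. -/
theorem stmt3 (M : ℕ) (a b : ℝ) (d : Fin M → ℝ) (hd : ∀ p, d p = a ∨ d p = b)
    (W V : Matrix (Fin M) (Fin M) ℂ) (E : Fin M → ℝ) (q₀ : Fin M) :
    ∃ A B φ : ℝ, ∀ x : ℝ,
      (∑ p, E p *
          (‖(W * Matrix.diagonal
              (fun p : Fin M => Complex.exp (Complex.I * (d p : ℂ) * (x : ℂ))) * V) p q₀‖) ^ 2)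
        = A * Real.sin (|a - b| * x - φ) + B := by
  obtain ⟨u, v, hentry⟩ : ∃ u v : Fin M → ℂ, ∀ p (x : ℝ),
      (W * Matrix.diagonal (fun k => exp (I * d k * x)) * V) p q₀ =
        exp (↑(a * x) * I) * u p + exp (↑(b * x) * I) * v p := by
    refine ⟨fun p => ∑ k with d k = a, W p k * V k q₀,
      fun p => ∑ k with d k ≠ a, W p k * V k q₀, fun p x => ?_⟩
    have hphase (t : ℝ) : I * t * x = ↑(t * x) * I := by push_cast; ring
    simp only [hphase]
    rw [mul_diagonal_mul_apply_of_two_valued W V d (fun t : ℝ => exp (↑(t * x) * I)) hd]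
  obtain ⟨A, φ, hsin⟩ :=
    exists_re_mul_exp_eq_mul_sin_abs (∑ p, ↑(2 * E p) * (u p * conj (v p))) (a - b)
  refine ⟨A, ∑ p, E p * (‖u p‖ ^ 2 + ‖v p‖ ^ 2), φ, fun x => ?_⟩
  rw [← hsin x, Finset.sum_mul, re_sum, ← sum_add_distrib]
  refine sum_congr rfl fun p _ => ?_
  rw [hentry, sq_norm_exp_mul_add_exp_mul, ← sub_mul, mul_assoc (↑(2 * E p) : ℂ),
    re_ofReal_mul]
  ring
end

section
/- Let M ∈ ℕ, let Q and H be Hermitian M×M complex matrices, and let a, b ∈ ℝ satisfy (Q − a·I)(Q − b·I) = 0. Then for every vector ψ ∈ ℂ^M there exist A, B, φ ∈ ℝ such that for all x ∈ ℝ, the quantity ψ† · exp(i x Q)† · H · exp(i x Q) · ψ is real and equals A·sin(|a−b|·x − φ) + B, where exp denotes the matrix exponential. -/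
/-!
Since `(Q - a)(Q - b) = 0` and `Q` is Hermitian, `Q = a P + b (1 - P)` for an idempotent `P`
(`P = 0` when `a = b`, because a Hermitian matrix with zero square vanishes). The map
`(u, v) ↦ u P + v (1 - P)` is a continuous ring homomorphism out of `ℂ × ℂ`, so it commutes
with `exp`, giving `exp (i x Q) = e^{i x a} P + e^{i x b} (1 - P)`. Expanding the quadratic form of `H`
at `e^{i x a} P ψ + e^{i x b} (1 - P) ψ` leaves two constant real terms and
`2 Re (e^{i (b - a) x} w)`, a sinusoid of frequency `|a - b|`.
-/

open scoped Matrix ComplexConjugate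

open Complex in
lemma exists_re_exp_mul_I_mul_eq_sin (w : ℂ) :
    ∃ A φ : ℝ, ∀ θ : ℝ, (exp (θ * I) * w).re = A * Real.sin (θ - φ) := by
  refine ⟨‖w‖, -(arg w + Real.pi / 2), fun θ => ?_⟩
  conv_lhs => rw [← norm_mul_exp_arg_mul_I w]
  rw [mul_left_comm, ← Complex.exp_add, ← add_mul, ← ofReal_add, re_ofReal_mul,
    exp_ofReal_mul_I_re, ← Real.sin_add_pi_div_two]
  ring_nf

open Complex in
lemma exists_re_exp_mul_I_mul_eq_sin_abs (c : ℝ) (w : ℂ) :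
    ∃ A φ : ℝ, ∀ x : ℝ, (exp ((c * x : ℝ) * I) * w).re = A * Real.sin (|c| * x - φ) := by
  rcases abs_choice c with hc | hc
  · obtain ⟨A, φ, h⟩ := exists_re_exp_mul_I_mul_eq_sin w
    exact ⟨A, φ, fun x => by rw [h, hc]⟩
  · obtain ⟨A, φ, h⟩ := exists_re_exp_mul_I_mul_eq_sin (conj w)
    refine ⟨A, φ, fun x => ?_⟩
    rw [hc, ← h, ← conj_re, map_mul, ← exp_conj]
    simp [neg_mul]

def IsIdempotentElem.prodRingHom (R : Type*) {𝔸 : Type*} [CommRing R] [Ring 𝔸] [Algebra R 𝔸]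
    {P : 𝔸} (hP : IsIdempotentElem P) : R × R →+* 𝔸 where
  toFun z := z.1 • P + z.2 • (1 - P)
  map_one' := by simp
  map_zero' := by simp
  map_add' z w := by simp only [Prod.fst_add, Prod.snd_add, add_smul]; abel
  map_mul' z w := by
    have h1 : P * (1 - P) = 0 := by rw [mul_sub, mul_one, hP.eq, sub_self]
    have h2 : (1 - P) * P = 0 := by rw [sub_mul, one_mul, hP.eq, sub_self]
    simp only [Prod.fst_mul, Prod.snd_mul, add_mul, mul_add, smul_mul_smul_comm, hP.eq, h1, h2,
      hP.one_sub.eq, smul_zero, add_zero, zero_add, mul_comm z.1, mul_comm z.2]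

lemma IsIdempotentElem.exp_smul_add_smul_one_sub {𝔸 : Type*} [NormedRing 𝔸] [NormedAlgebra ℂ 𝔸]
    [CompleteSpace 𝔸] {P : 𝔸} (hP : IsIdempotentElem P) (u v : ℂ) :
    NormedSpace.exp (u • P + v • (1 - P)) = Complex.exp u • P + Complex.exp v • (1 - P) := by
  let _ : NormedAlgebra ℚ 𝔸 := .restrictScalars ℚ ℂ 𝔸
  have hcont : Continuous (hP.prodRingHom ℂ) := by
    show Continuous fun z : ℂ × ℂ => z.1 • P + z.2 • (1 - P)
    fun_prop
  have := NormedSpace.map_exp (hP.prodRingHom ℂ) hcont (u, v)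
  simp only [IsIdempotentElem.prodRingHom, RingHom.coe_mk, MonoidHom.coe_mk, OneHom.coe_mk,
    Prod.fst_exp, Prod.snd_exp] at this
  rw [← this, Complex.exp_eq_exp_ℂ]

namespace Matrix

variable {n : Type*} [Fintype n]

open ComplexOrder in
lemma IsHermitian.exists_isIdempotentElem_of_mul_eq_zero [DecidableEq n] {Q : Matrix n n ℂ}
    (hQ : Q.IsHermitian) {a b : ℝ} (hab : (Q - (a : ℂ) • 1) * (Q - (b : ℂ) • 1) = 0) :
    ∃ P : Matrix n n ℂ, IsIdempotentElem P ∧ Q = (a : ℂ) • P + (b : ℂ) • (1 - P) := by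
  by_cases h : a = b
  · subst h
    refine ⟨0, IsIdempotentElem.zero, ?_⟩
    have hself : (Q - (a : ℂ) • 1)ᴴ = Q - (a : ℂ) • 1 := by
      simp [conjTranspose_sub, hQ.eq, conjTranspose_smul, conjTranspose_one]
    nth_rewrite 1 [← hself] at hab
    have hQa := conjTranspose_mul_self_eq_zero.mp hab
    rw [sub_eq_zero] at hQa
    simp [hQa]
  · have hab' : ((a : ℂ) - b) ≠ 0 := sub_ne_zero.mpr (by exact_mod_cast h)
    have hsq : (Q - (b : ℂ) • 1) * (Q - (b : ℂ) • 1) = ((a : ℂ) - b) • (Q - (b : ℂ) • 1) := by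
      have hQa : Q - (a : ℂ) • 1 = (Q - (b : ℂ) • 1) - ((a : ℂ) - b) • 1 := by
        rw [sub_smul]; abel
      rw [hQa, sub_mul, smul_mul, one_mul, sub_eq_zero] at hab
      exact hab
    refine ⟨((a : ℂ) - b)⁻¹ • (Q - (b : ℂ) • 1), ?_, ?_⟩
    · rw [IsIdempotentElem, smul_mul_smul_comm, hsq, smul_smul, mul_assoc, inv_mul_cancel₀ hab',
        mul_one]
    · rw [smul_sub (b : ℂ), ← add_sub_assoc, add_sub_right_comm, ← sub_smul, smul_smul,
        mul_inv_cancel₀ hab', one_smul, sub_add_cancel]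

lemma exp_smul_add_smul_one_sub [DecidableEq n] {P : Matrix n n ℂ} (hP : IsIdempotentElem P)
    (u v : ℂ) :
    NormedSpace.exp (u • P + v • (1 - P)) = Complex.exp u • P + Complex.exp v • (1 - P) := by
  let _ : NormedRing (Matrix n n ℂ) := Matrix.linftyOpNormedRing
  let _ : NormedAlgebra ℂ (Matrix n n ℂ) := Matrix.linftyOpNormedAlgebra
  exact hP.exp_smul_add_smul_one_sub u v

lemma star_dotProduct_conjTranspose_mul_mul_mulVec (U H : Matrix n n ℂ) (ψ : n → ℂ) :
    star ψ ⬝ᵥ ((Uᴴ * H * U) *ᵥ ψ) = star (U *ᵥ ψ) ⬝ᵥ (H *ᵥ (U *ᵥ ψ)) := by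
  rw [← mulVec_mulVec, ← mulVec_mulVec, dotProduct_mulVec, star_mulVec]

lemma IsHermitian.star_dotProduct_mulVec_comm {H : Matrix n n ℂ} (hH : H.IsHermitian)
    (u v : n → ℂ) : star v ⬝ᵥ (H *ᵥ u) = conj (star u ⬝ᵥ (H *ᵥ v)) := by
  rw [star_dotProduct, star_mulVec, hH.eq, dotProduct_mulVec]
  rfl

lemma IsHermitian.coe_re_star_dotProduct_mulVec_self {H : Matrix n n ℂ} (hH : H.IsHermitian)
    (u : n → ℂ) : ((star u ⬝ᵥ (H *ᵥ u)).re : ℂ) = star u ⬝ᵥ (H *ᵥ u) :=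
  Complex.ext rfl (by simpa using (hH.im_star_dotProduct_mulVec_self u).symm)

lemma IsHermitian.star_dotProduct_mulVec_smul_add_smul {H : Matrix n n ℂ}
    (hH : H.IsHermitian) (u v : n → ℂ) {α β : ℂ} (hα : ‖α‖ = 1) (hβ : ‖β‖ = 1) :
    star (α • u + β • v) ⬝ᵥ (H *ᵥ (α • u + β • v)) =
      (((star u ⬝ᵥ (H *ᵥ u)).re + (star v ⬝ᵥ (H *ᵥ v)).re +
        2 * (conj α * β * (star u ⬝ᵥ (H *ᵥ v))).re : ℝ) : ℂ) := by
  have hαα : conj α * α = 1 := by rw [Complex.conj_mul', hα]; simp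
  have hββ : conj β * β = 1 := by rw [Complex.conj_mul', hβ]; simp
  simp only [star_add, star_smul, mulVec_add, mulVec_smul, add_dotProduct, dotProduct_add,
    smul_dotProduct, dotProduct_smul, smul_eq_mul, Complex.star_def,
    hH.star_dotProduct_mulVec_comm u v]
  push_cast
  rw [hH.coe_re_star_dotProduct_mulVec_self, hH.coe_re_star_dotProduct_mulVec_self,
    Complex.re_eq_add_conj, map_mul, map_mul, Complex.conj_conj]
  linear_combination (star u ⬝ᵥ (H *ᵥ u)) * hαα + (star v ⬝ᵥ (H *ᵥ v)) * hββ

end Matrix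

open Complex Matrix in
/-- Abstract dual-valued phase shifter result: if `Q` is Hermitian with exactly two eigenvalues
`a, b` (i.e. `(Q − aI)(Q − bI) = 0`), then for any Hermitian observable `H` and any state `ψ`,
the expectation value `ψ† e^{−ixQ} H e^{ixQ} ψ` is a real sinusoid of frequency `|a − b|`. -/
theorem stmt4 (M : ℕ) (Q H : Matrix (Fin M) (Fin M) ℂ)
    (hQ : Q.IsHermitian) (hH : H.IsHermitian) (a b : ℝ)
    (hab : (Q - (a : ℂ) • (1 : Matrix (Fin M) (Fin M) ℂ)) *
        (Q - (b : ℂ) • (1 : Matrix (Fin M) (Fin M) ℂ)) = 0)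
    (ψ : Fin M → ℂ) :
    ∃ A B φ : ℝ, ∀ x : ℝ,
      star ψ ⬝ᵥ (((NormedSpace.exp ((Complex.I * (x : ℂ)) • Q))ᴴ * H *
          NormedSpace.exp ((Complex.I * (x : ℂ)) • Q)) *ᵥ ψ)
        = ((A * Real.sin (|a - b| * x - φ) + B : ℝ) : ℂ) := by
  obtain ⟨P, hP, rfl⟩ := hQ.exists_isIdempotentElem_of_mul_eq_zero hab
  set u := P *ᵥ ψ
  set v := (1 - P) *ᵥ ψ
  obtain ⟨A, φ, hAφ⟩ := exists_re_exp_mul_I_mul_eq_sin_abs (b - a) (star u ⬝ᵥ (H *ᵥ v))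
  refine ⟨2 * A, (star u ⬝ᵥ (H *ᵥ u)).re + (star v ⬝ᵥ (H *ᵥ v)).re, φ, fun x => ?_⟩
  have hU : NormedSpace.exp ((I * x) • ((a : ℂ) • P + (b : ℂ) • (1 - P))) =
      exp ((x * a : ℝ) * I) • P + exp ((x * b : ℝ) * I) • (1 - P) := by
    rw [smul_add, smul_smul, smul_smul, exp_smul_add_smul_one_sub hP]
    push_cast
    ring_nf
  have hphase :
      conj (exp ((x * a : ℝ) * I)) * exp ((x * b : ℝ) * I) = exp (((b - a) * x : ℝ) * I) := by
    rw [← exp_conj, ← exp_add, map_mul, conj_ofReal, conj_I]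
    push_cast
    ring_nf
  rw [star_dotProduct_conjTranspose_mul_mul_mulVec, hU, add_mulVec, smul_mulVec, smul_mulVec,
    hH.star_dotProduct_mulVec_smul_add_smul _ _ (norm_exp_ofReal_mul_I _)
      (norm_exp_ofReal_mul_I _), hphase, hAφ, abs_sub_comm]
  push_cast
  ring
end

section
/- Let n ≥ 1 and let f : ℝ → ℝ be given by f(x) = Σ_{k=−n}^{n} c_k e^{i k x} with complex coefficients satisfying c_{−k} = conj(c_k) for all k. Then f is differentiable and for all x ∈ ℝ, f'(x) = Σ_{k=1}^{2n} f(x + x_k) · (−1)^{k+1} / (4n · sin²(x_k/2)), where x_k = (2k−1)π/(2n). -/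
/-!
Write `z_k = exp (i x_k)`, so that `z_k ^ (2n) = -1` and, by the half-angle formula,
`(z_k - 1)² = -4 sin²(x_k/2) z_k`. The `k`-th weight `w_k` is then `i z_k^(n+1) / (n (z_k - 1)²)`,
and because `z_k ^ (2n) = -1` this rational function equals the polynomial
`-(i/2n) ∑_{j<2n} (n - j) z_k^(n+j)`. The `z_k` are a rotated copy of the `2n`-th roots of
unity, so `∑_k z_k^e = 0` unless `2n ∣ e`; this leaves exactly one term and gives
`∑_k w_k z_k^m = i m` for `|m| ≤ n`. Thus the shift rule is exact on every harmonic `e^{imx}`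
that occurs in `f`.
-/

open Complex Finset
open scoped Real

noncomputable def trigPoly (n : ℕ) (c : ℤ → ℂ) (x : ℝ) : ℂ :=
  ∑ k ∈ Icc (-(n : ℤ)) n, c k * exp (I * k * x)

noncomputable def shiftNode (n k : ℕ) : ℝ := (2 * (k : ℝ) - 1) * π / (2 * n)

noncomputable def shiftWeight (n k : ℕ) : ℝ :=
  (-1 : ℝ) ^ (k + 1) / (4 * n * Real.sin (shiftNode n k / 2) ^ 2)

theorem sum_Icc_one_pow_eq_zero {K : Type*} [Field K] {y : K} {N : ℕ} (hyN : y ^ N = 1)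
    (hy : y ≠ 1) : ∑ k ∈ Icc 1 N, y ^ k = 0 := by
  rw [← Ico_add_one_right_eq_Icc, geom_sum_Ico hy (by omega), pow_succ, hyN]
  simp

theorem sub_one_sq_mul_sum_range {K : Type*} [Field K] (c z : K) (N : ℕ) :
    (z - 1) ^ 2 * ∑ j ∈ range N, (c - j) * z ^ j
      = (z ^ N - 1) - (c + 1) * (z - 1) + (c - N + 1) * (z ^ (N + 1) - z ^ N) := by
  induction N with
  | zero => simp
  | succ N ih =>
    rw [sum_range_succ, mul_add, ih]
    push_cast
    ring

theorem sub_one_sq_mul_sum_range_of_pow_eq_neg_one {K : Type*} [Field K] {z : K} {n : ℕ}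
    (hz : z ^ (2 * n) = -1) :
    (z - 1) ^ 2 * ∑ j ∈ range (2 * n), ((n : K) - j) * z ^ j = -2 * z := by
  rw [sub_one_sq_mul_sum_range, pow_succ, hz]
  push_cast
  ring

theorem exp_mul_I_sub_one_sq (θ : ℝ) :
    (exp (θ * I) - 1) ^ 2 = -4 * (Real.sin (θ / 2) : ℂ) ^ 2 * exp (θ * I) := by
  set e := exp (θ / 2 * I) with he_def
  have hsq : exp (θ * I) = e ^ 2 := by
    rw [he_def, ← exp_nat_mul]; push_cast; ring_nf
  have hsin : (Real.sin (θ / 2) : ℂ) = (e⁻¹ - e) * I / 2 := by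
    rw [ofReal_sin, Complex.sin, he_def, ← exp_neg]; push_cast; ring_nf
  have he : e ≠ 0 := exp_ne_zero _
  rw [hsin, hsq]
  field_simp
  linear_combination 4 * (e ^ 2 - 1) ^ 2 * I_sq

theorem hasDerivAt_trigPoly (n : ℕ) (c : ℤ → ℂ) (x : ℝ) :
    HasDerivAt (trigPoly n c) (trigPoly n (fun k => I * k * c k) x) x := by
  unfold trigPoly
  refine HasDerivAt.fun_sum fun k _ => ?_
  have h := (((hasDerivAt_id (x : ℂ)).const_mul (I * k)).cexp.const_mul (c k)).comp_ofReal
  exact h.congr_deriv (by simp only [id, mul_one]; ring)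

theorem exp_shiftNode_mul_I {n : ℕ} (hn : n ≠ 0) (k : ℕ) :
    exp (shiftNode n k * I) = exp (-(π / (2 * n)) * I) * exp (2 * π * I / (2 * n : ℕ)) ^ k := by
  rw [← exp_nat_mul, ← exp_add, shiftNode]
  congr 1
  push_cast
  field_simp
  ring

theorem exp_shiftNode_mul_I_pow_two_mul {n : ℕ} (hn : n ≠ 0) (k : ℕ) :
    exp (shiftNode n k * I) ^ (2 * n) = -1 := by
  have hω := Complex.isPrimitiveRoot_exp (2 * n) (by omega)
  rw [exp_shiftNode_mul_I hn, mul_pow, pow_right_comm _ k, hω.pow_eq_one, one_pow, mul_one,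
    ← exp_nat_mul]
  convert exp_neg (π * I) using 2
  · push_cast; field_simp
  · rw [exp_pi_mul_I, inv_neg, inv_one]

theorem exp_shiftNode_mul_I_ne_one {n : ℕ} (hn : n ≠ 0) (k : ℕ) :
    exp (shiftNode n k * I) ≠ 1 := fun h => by
  have h2n := exp_shiftNode_mul_I_pow_two_mul hn k
  norm_num [h] at h2n

theorem exp_shiftNode_mul_I_pow {n : ℕ} (hn : n ≠ 0) (k : ℕ) :
    exp (shiftNode n k * I) ^ n = (-1) ^ (k + 1) * I := by
  have hζ : exp (-(π / (2 * n)) * I) ^ n = -I := by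
    rw [← exp_nat_mul]
    convert exp_neg (π / 2 * I) using 2
    · field_simp
    · rw [exp_pi_div_two_mul_I, inv_I]
  have hω : exp (2 * π * I / (2 * n : ℕ)) ^ n = -1 := by
    rw [← exp_nat_mul, ← exp_pi_mul_I]
    congr 1
    push_cast
    field_simp
  rw [exp_shiftNode_mul_I hn, mul_pow, pow_right_comm _ k, hζ, hω]
  ring

theorem sum_exp_shiftNode_mul_I_pow_eq_zero {n e : ℕ} (hn : n ≠ 0) (he : ¬ 2 * n ∣ e) :
    ∑ k ∈ Icc 1 (2 * n), exp (shiftNode n k * I) ^ e = 0 := by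
  have hω := Complex.isPrimitiveRoot_exp (2 * n) (by omega)
  simp_rw [exp_shiftNode_mul_I hn, mul_pow, pow_right_comm _ _ e]
  rw [← mul_sum, sum_Icc_one_pow_eq_zero, mul_zero]
  · rw [pow_right_comm, hω.pow_eq_one, one_pow]
  · rwa [Ne, hω.pow_eq_one_iff_dvd]

theorem shiftWeight_eq {n : ℕ} (hn : n ≠ 0) (k : ℕ) :
    (shiftWeight n k : ℂ) =
      I * exp (shiftNode n k * I) ^ (n + 1) / (n * (exp (shiftNode n k * I) - 1) ^ 2) := by
  have hsign : (-1 : ℂ) ^ (k + 1) = -I * exp (shiftNode n k * I) ^ n := by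
    rw [exp_shiftNode_mul_I_pow hn]
    linear_combination (-1 : ℂ) ^ (k + 1) * I_sq
  have hz1 := sub_ne_zero.mpr (exp_shiftNode_mul_I_ne_one hn k)
  have hsin := exp_mul_I_sub_one_sq (shiftNode n k)
  have hz := exp_ne_zero (shiftNode n k * I)
  rw [shiftWeight, ofReal_div, ofReal_pow, ofReal_neg, ofReal_one, hsign, ofReal_mul, ofReal_mul,
    ofReal_ofNat, ofReal_natCast, ofReal_pow, hsin]
  generalize exp (shiftNode n k * I) = z at *
  generalize (Real.sin (shiftNode n k / 2) : ℂ) = s at *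
  have hs : s ≠ 0 := by rintro rfl; simp_all
  field_simp
  ring

theorem shiftWeight_eq_sum {n : ℕ} (hn : n ≠ 0) (k : ℕ) :
    (shiftWeight n k : ℂ) = -(I / (2 * n)) *
      ∑ j ∈ range (2 * n), ((n : ℂ) - j) * exp (shiftNode n k * I) ^ (n + j) := by
  have hz1 := sub_ne_zero.mpr (exp_shiftNode_mul_I_ne_one hn k)
  have hsum := sub_one_sq_mul_sum_range_of_pow_eq_neg_one (exp_shiftNode_mul_I_pow_two_mul hn k)
  rw [shiftWeight_eq hn]
  generalize exp (shiftNode n k * I) = z at *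
  simp_rw [pow_add z n, mul_left_comm _ (z ^ n), ← mul_sum]
  have hS : ∑ j ∈ range (2 * n), ((n : ℂ) - j) * z ^ j = -2 * z / (z - 1) ^ 2 := by
    rw [eq_div_iff (pow_ne_zero 2 hz1), mul_comm, hsum]
  rw [hS]
  field_simp

theorem sum_range_mul_sum_exp_shiftNode_pow {n p : ℕ} (hn : n ≠ 0) (hp : p ≤ 2 * n) :
    ∑ j ∈ range (2 * n),
        ((n : ℂ) - j) * ∑ k ∈ Icc 1 (2 * n), exp (shiftNode n k * I) ^ (j + p)
      = -2 * n * (p - n) := by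
  have hvanish : ∀ j ∈ range (2 * n), j + p ≠ 0 → j + p ≠ 2 * n →
      ((n : ℂ) - j) * ∑ k ∈ Icc 1 (2 * n), exp (shiftNode n k * I) ^ (j + p) = 0 := by
    intro j hj h0 h2n
    rw [sum_exp_shiftNode_mul_I_pow_eq_zero hn, mul_zero]
    rintro ⟨q, hq⟩
    rw [mem_range] at hj
    have : q < 2 := by nlinarith
    interval_cases q <;> omega
  rcases Nat.eq_zero_or_pos p with rfl | hp0
  · rw [sum_eq_single_of_mem 0 (by simp; omega)
      fun j hj hj0 => hvanish j hj (by omega) (by rw [mem_range] at hj; omega)]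
    simp only [add_zero, pow_zero, sum_const, Nat.card_Icc, nsmul_eq_mul, mul_one]
    push_cast
    ring
  · rw [sum_eq_single_of_mem (2 * n - p) (by simp; omega)
      fun j hj hj' => hvanish j hj (by omega) (by omega)]
    simp only [Nat.sub_add_cancel hp, exp_shiftNode_mul_I_pow_two_mul hn, sum_const, Nat.card_Icc,
      nsmul_eq_mul]
    push_cast [Nat.cast_sub hp]
    ring

theorem sum_shiftWeight_mul_zpow {n : ℕ} (hn : n ≠ 0) {m : ℤ}
    (hm : m ∈ Icc (-(n : ℤ)) n) :
    ∑ k ∈ Icc 1 (2 * n), (shiftWeight n k : ℂ) * exp (shiftNode n k * I) ^ m = I * m := by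
  rw [mem_Icc] at hm
  obtain ⟨p, hp⟩ : ∃ p : ℕ, m + n = p := Int.eq_ofNat_of_zero_le (by omega)
  have hshift : ∀ k j : ℕ, exp (shiftNode n k * I) ^ (n + j) * exp (shiftNode n k * I) ^ m
      = exp (shiftNode n k * I) ^ (j + p) := by
    intro k j
    rw [← zpow_natCast, ← zpow_add₀ (exp_ne_zero _), ← zpow_natCast]
    congr 1
    push_cast
    omega
  simp_rw [shiftWeight_eq_sum hn, mul_assoc, sum_mul, mul_assoc, hshift]
  rw [← mul_sum, sum_comm]
  simp_rw [← mul_sum]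
  rw [sum_range_mul_sum_exp_shiftNode_pow hn (by omega), show m = (p : ℤ) - n by omega]
  push_cast
  field_simp

theorem sum_shiftWeight_mul_trigPoly (n : ℕ) (c : ℤ → ℂ) (x : ℝ) :
    ∑ k ∈ Icc 1 (2 * n), (shiftWeight n k : ℂ) * trigPoly n c (x + shiftNode n k) =
      trigPoly n (fun m => I * m * c m) x := by
  rcases eq_or_ne n 0 with rfl | hn
  · simp [trigPoly]
  have hexp : ∀ (m : ℤ) (k : ℕ), exp (I * m * ↑(x + shiftNode n k)) =
      exp (I * m * x) * exp (shiftNode n k * I) ^ m := by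
    intro m k
    rw [← exp_int_mul, ← exp_add]
    push_cast
    ring_nf
  simp only [trigPoly, mul_sum, hexp]
  rw [sum_comm]
  refine sum_congr rfl fun m hm => ?_
  calc _ = c m * exp (I * m * x) *
        ∑ k ∈ Icc 1 (2 * n), (shiftWeight n k : ℂ) * exp (shiftNode n k * I) ^ m := by
        rw [mul_sum]
        exact sum_congr rfl fun k _ => by ring
    _ = _ := by rw [sum_shiftWeight_mul_zpow hn hm]; ring

theorem stmt5_general (n : ℕ) (c : ℤ → ℂ) (f : ℝ → ℝ)
    (hf : ∀ x : ℝ, (f x : ℂ) = ∑ k ∈ Finset.Icc (-(n : ℤ)) (n : ℤ),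
      c k * Complex.exp (Complex.I * (k : ℂ) * (x : ℂ))) :
    Differentiable ℝ f ∧ ∀ x : ℝ,
      deriv f x = ∑ k ∈ Finset.Icc 1 (2 * n),
        f (x + (2 * (k : ℝ) - 1) * Real.pi / (2 * n)) * (-1 : ℝ) ^ (k + 1) /
          (4 * n * Real.sin ((2 * (k : ℝ) - 1) * Real.pi / (2 * n) / 2) ^ 2) := by
  have hf' (x : ℝ) : (f x : ℂ) = trigPoly n c x := hf x
  have hf_re : f = fun x => (trigPoly n c x).re := funext fun x => by rw [← hf', ofReal_re]
  have hderiv (x : ℝ) : HasDerivAt f (trigPoly n (fun m => I * m * c m) x).re x := by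
    rw [hf_re]
    exact reCLM.hasFDerivAt.comp_hasDerivAt x (hasDerivAt_trigPoly n c x)
  refine ⟨fun x => (hderiv x).differentiableAt, fun x => ?_⟩
  rw [(hderiv x).deriv, ← sum_shiftWeight_mul_trigPoly]
  simp_rw [← hf', ← ofReal_mul, ← ofReal_sum, ofReal_re]
  exact sum_congr rfl fun k _ => by rw [shiftWeight, shiftNode]; ring

/-- The generalised parameter-shift rule (Eq. 9): the derivative of a real trigonometric
polynomial of degree at most `n` is an exact linear combination of `2n` shifted evaluations
at the equally spaced shifts `x_k = (2k−1)π/(2n)`. -/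
theorem stmt5 (n : ℕ) (hn : 1 ≤ n) (c : ℤ → ℂ) (hc : ∀ k : ℤ, c (-k) = starRingEnd ℂ (c k))
    (f : ℝ → ℝ)
    (hf : ∀ x : ℝ, (f x : ℂ) = ∑ k ∈ Finset.Icc (-(n : ℤ)) (n : ℤ),
      c k * Complex.exp (Complex.I * (k : ℂ) * (x : ℂ))) :
    Differentiable ℝ f ∧ ∀ x : ℝ,
      deriv f x = ∑ k ∈ Finset.Icc 1 (2 * n),
        f (x + (2 * (k : ℝ) - 1) * Real.pi / (2 * n)) * (-1 : ℝ) ^ (k + 1) /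
          (4 * n * Real.sin ((2 * (k : ℝ) - 1) * Real.pi / (2 * n) / 2) ^ 2) :=
  stmt5_general n c f hf
end

section
/- Let n ≥ 1 and let m be an integer with |m| ≤ n. Then Σ_{k=1}^{2n} (−1)^{k+1} · e^{i m x_k} / (4n · sin²(x_k/2)) = i·m, where x_k = (2k−1)π/(2n). -/
/-!
Put `ω_k = e^{i x_k}`; these are the `2n` roots of `ω^{2n} = -1`. Since
`4 sin²(x/2) = -(ω - 1)²/ω` and `(-1)^{k+1} = -i ω_k^n`, the `k`-th term equals
`(i/n) ω_k^j/(ω_k - 1)²` with `j = n + m + 1 ∈ [1, 2n + 1]`. For `T(j) = Σ_k ω_k^j/(ω_k - 1)²`,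
the increment `T(j+1) - T(j) = Σ_k ω_k^j/(ω_k - 1)` equals `n` for `1 ≤ j ≤ 2n`, because
`1/(ω - 1) = -½ Σ_{s<2n} ω^s` and the power sum `Σ_k ω_k^u` vanishes unless `2n ∣ u`.
So `T` is affine on `[1, 2n + 1]`, and the antiperiodicity `T(j + 2n) = -T(j)` fixes it as
`T(j) = n (j - 1 - n)`, which gives `i m`.
-/

open Complex Finset
open scoped Real

section PowEqNegOne

variable {K : Type*} [Field K] [CharZero K] {N : ℕ} {ω : K}

lemma sub_one_ne_zero_of_pow_eq_neg_one (h : ω ^ N = -1) : ω - 1 ≠ 0 := by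
  rintro hω
  rw [sub_eq_zero.mp hω, one_pow] at h
  norm_num at h

lemma inv_sub_one_eq_of_pow_eq_neg_one (h : ω ^ N = -1) :
    (ω - 1)⁻¹ = -(1 / 2) * ∑ s ∈ range N, ω ^ s := by
  have hgeom := mul_geom_sum ω N
  rw [h] at hgeom
  field_simp [sub_one_ne_zero_of_pow_eq_neg_one h]
  linear_combination hgeom

end PowEqNegOne

noncomputable def oddRoot (N k : ℕ) : ℂ := exp (I * (((2 * k - 1) * π / N : ℝ) : ℂ))

lemma oddRoot_eq_pow (N : ℕ) {k : ℕ} (hk : 1 ≤ k) :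
    oddRoot N k = exp (π * I / N) ^ (2 * k - 1) := by
  rw [oddRoot, ← exp_nat_mul]
  congr 1
  push_cast [Nat.cast_sub (by omega : 1 ≤ 2 * k)]
  ring

section OddRoots

variable {N : ℕ}

lemma oddRoot_pow_self (hN : N ≠ 0) {k : ℕ} (hk : 1 ≤ k) : oddRoot N k ^ N = -1 := by
  have hNπ : (N : ℂ) * (π * I / N) = π * I := by field_simp
  rw [oddRoot_eq_pow N hk, pow_right_comm, ← exp_nat_mul, hNπ, exp_pi_mul_I]
  exact Odd.neg_one_pow ⟨k - 1, by omega⟩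

lemma sum_oddRoot_pow_eq_zero (hN : N ≠ 0) {u : ℕ} (hu : ¬ N ∣ u) :
    ∑ k ∈ Icc 1 N, oddRoot N k ^ u = 0 := by
  set ζ := exp (π * I / N)
  have hη : IsPrimitiveRoot (ζ ^ 2) N := by
    convert isPrimitiveRoot_exp N hN using 1
    rw [← exp_nat_mul]
    congr 1
    push_cast
    ring
  have hterm : ∀ i ∈ range N, oddRoot N (1 + i) ^ u = ζ ^ u * ((ζ ^ 2) ^ u) ^ i := by
    intro i _
    rw [oddRoot_eq_pow N (by omega), show 2 * (1 + i) - 1 = 2 * i + 1 by omega]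
    ring
  rw [← Ico_add_one_right_eq_Icc, sum_Ico_eq_sum_range, Nat.add_sub_cancel, sum_congr rfl hterm,
    ← mul_sum, geom_sum_eq (by rwa [Ne, hη.pow_eq_one_iff_dvd]), pow_right_comm,
    hη.pow_eq_one, one_pow, sub_self, zero_div, mul_zero]

lemma sum_oddRoot_pow_div_sub_one (hN : N ≠ 0) {j : ℕ} (hj : 1 ≤ j) (hjN : j ≤ N) :
    ∑ k ∈ Icc 1 N, oddRoot N k ^ j / (oddRoot N k - 1) = N / 2 := by
  have hterm : ∀ k ∈ Icc 1 N, oddRoot N k ^ j / (oddRoot N k - 1) =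
      -(1 / 2) * ∑ s ∈ range N, oddRoot N k ^ (j + s) := by
    intro k hk
    simp only [div_eq_mul_inv,
      inv_sub_one_eq_of_pow_eq_neg_one (oddRoot_pow_self hN (mem_Icc.1 hk).1), pow_add, ← mul_sum]
    ring
  -- `j + s` runs through `[1, 2N - 1]`, which contains a single multiple of `N`, namely `N`
  rw [sum_congr rfl hterm, ← mul_sum, sum_comm, sum_eq_single (N - j)]
  · rw [Nat.add_sub_cancel' hjN, sum_congr rfl fun k hk => oddRoot_pow_self hN (mem_Icc.1 hk).1,
      sum_const, Nat.card_Icc, nsmul_eq_mul]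
    push_cast
    ring
  · intro s hs hne
    refine sum_oddRoot_pow_eq_zero hN fun hdvd => hne ?_
    have := Nat.eq_of_dvd_of_lt_two_mul (by omega) hdvd (by rw [mem_range] at hs; omega)
    omega
  · exact fun h => absurd (mem_range.2 (by omega)) h

noncomputable def shiftKernel (N j : ℕ) : ℂ :=
  ∑ k ∈ Icc 1 N, oddRoot N k ^ j / (oddRoot N k - 1) ^ 2

lemma shiftKernel_succ (hN : N ≠ 0) {j : ℕ} (hj : 1 ≤ j) (hjN : j ≤ N) :
    shiftKernel N (j + 1) = shiftKernel N j + N / 2 := by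
  rw [shiftKernel, shiftKernel, ← sum_oddRoot_pow_div_sub_one hN hj hjN, ← sum_add_distrib]
  refine sum_congr rfl fun k hk => ?_
  have := sub_one_ne_zero_of_pow_eq_neg_one (oddRoot_pow_self hN (mem_Icc.1 hk).1)
  field_simp
  ring

lemma shiftKernel_add_self (hN : N ≠ 0) (j : ℕ) : shiftKernel N (j + N) = -shiftKernel N j := by
  rw [shiftKernel, shiftKernel, ← sum_neg_distrib]
  refine sum_congr rfl fun k hk => ?_
  rw [pow_add, oddRoot_pow_self hN (mem_Icc.1 hk).1]
  ring

lemma shiftKernel_eq_add (hN : N ≠ 0) {j : ℕ} (hj : 1 ≤ j) (hjN : j ≤ N + 1) :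
    shiftKernel N j = shiftKernel N 1 + (j - 1) * N / 2 := by
  induction j, hj using Nat.le_induction with
  | base => simp
  | succ j hj ih =>
    rw [shiftKernel_succ hN hj (by omega), ih (by omega)]
    push_cast
    ring

lemma shiftKernel_eq (hN : N ≠ 0) {j : ℕ} (hj : 1 ≤ j) (hjN : j ≤ N + 1) :
    shiftKernel N j = N * (2 * j - 2 - N) / 4 := by
  have hone : shiftKernel N 1 = -N ^ 2 / 4 := by
    have h := shiftKernel_eq_add hN (by omega : 1 ≤ N + 1) le_rfl
    rw [add_comm, shiftKernel_add_self hN] at h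
    push_cast at h
    linear_combination -h / 2
  rw [shiftKernel_eq_add hN hj hjN, hone]
  ring

end OddRoots

lemma oddRoot_pow_half {n : ℕ} (hn : n ≠ 0) {k : ℕ} (hk : 1 ≤ k) :
    oddRoot (2 * n) k ^ n = I * (-1) ^ (k + 1) := by
  have hnπ : (n : ℂ) * (π * I / (2 * n : ℕ)) = π / 2 * I := by
    push_cast
    field_simp
  obtain ⟨l, rfl⟩ := Nat.exists_eq_add_of_le' hk
  rw [oddRoot_eq_pow _ hk, pow_right_comm, ← exp_nat_mul, hnπ, exp_pi_div_two_mul_I,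
    show 2 * (l + 1) - 1 = 2 * l + 1 by omega, pow_succ, pow_mul, I_sq]
  ring

lemma four_mul_sin_half_sq_mul_exp (x : ℝ) :
    ((4 * Real.sin (x / 2) ^ 2 : ℝ) : ℂ) * exp (I * x) = -(exp (I * x) - 1) ^ 2 := by
  have hsin : 4 * Real.sin (x / 2) ^ 2 = 2 - 2 * Real.cos x := by
    rw [Real.sin_sq, Real.cos_sq, show 2 * (x / 2) = x by ring]
    ring
  have hcos : 2 * (Real.cos x : ℂ) = exp (I * x) + (exp (I * x))⁻¹ := by
    rw [ofReal_cos, two_cos, ← exp_neg]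
    ring_nf
  rw [hsin, ofReal_sub, ofReal_mul, ofReal_ofNat, hcos]
  field_simp
  ring

lemma shiftRule_term_eq {n : ℕ} (hn : n ≠ 0) {m : ℤ} {j : ℕ} (hj : (j : ℤ) = n + m + 1)
    {k : ℕ} (hk : 1 ≤ k) :
    (-1 : ℂ) ^ (k + 1) * exp (I * m * (((2 * (k : ℝ) - 1) * π / (2 * n) : ℝ) : ℂ)) /
        ((4 * n * Real.sin ((2 * (k : ℝ) - 1) * π / (2 * n) / 2) ^ 2 : ℝ) : ℂ)
      = I / n * (oddRoot (2 * n) k ^ j / (oddRoot (2 * n) k - 1) ^ 2) := by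
  set x : ℝ := (2 * (k : ℝ) - 1) * π / (2 * n)
  have hω : exp (I * x) = oddRoot (2 * n) k := by
    simp only [oddRoot, x, Nat.cast_mul, Nat.cast_ofNat]
  set ω := oddRoot (2 * n) k
  have hω0 : ω ≠ 0 := hω ▸ exp_ne_zero _
  have hω1 : ω - 1 ≠ 0 := sub_one_ne_zero_of_pow_eq_neg_one (oddRoot_pow_self (by omega) hk)
  have hsin := four_mul_sin_half_sq_mul_exp x
  rw [hω] at hsin
  have hexp : exp (I * m * x) = ω ^ m := by
    rw [← hω, ← exp_int_mul]
    ring_nf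
  have hpow : ω ^ j = ω ^ n * ω ^ m * ω := by
    rw [← zpow_natCast, hj, zpow_add₀ hω0, zpow_add₀ hω0, zpow_natCast, zpow_one]
  have hden : ((4 * n * Real.sin (x / 2) ^ 2 : ℝ) : ℂ) =
      n * ((4 * Real.sin (x / 2) ^ 2 : ℝ) : ℂ) := by
    push_cast
    ring
  set D := ((4 * Real.sin (x / 2) ^ 2 : ℝ) : ℂ)
  have hD : D ≠ 0 := by
    rintro h
    rw [h, zero_mul, eq_comm, neg_eq_zero] at hsin
    exact pow_ne_zero 2 hω1 hsin
  rw [hexp, hden, hpow, oddRoot_pow_half hn hk]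
  field_simp
  linear_combination hsin - ω * D * I_sq

/-- The kernel identity underlying the generalised parameter-shift rule (Eq. 9): the
shift-rule coefficients applied to the Fourier mode `e^{imx}` with `|m| ≤ n` produce
exactly the derivative factor `i·m`. -/
theorem stmt6 (n : ℕ) (hn : 1 ≤ n) (m : ℤ) (hm : |m| ≤ (n : ℤ)) :
    ∑ k ∈ Finset.Icc 1 (2 * n),
        (-1 : ℂ) ^ (k + 1) *
          Complex.exp (Complex.I * (m : ℂ) * (((2 * (k : ℝ) - 1) * Real.pi / (2 * n) : ℝ) : ℂ)) /
          ((4 * n * Real.sin ((2 * (k : ℝ) - 1) * Real.pi / (2 * n) / 2) ^ 2 : ℝ) : ℂ)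
      = Complex.I * (m : ℂ) := by
  obtain ⟨hm₁, hm₂⟩ := abs_le.mp hm
  obtain ⟨j, hj⟩ : ∃ j : ℕ, (j : ℤ) = n + m + 1 := ⟨(n + m + 1).toNat, by omega⟩
  have hjC : (j : ℂ) = n + m + 1 := by exact_mod_cast hj
  have hn0 : n ≠ 0 := by omega
  rw [sum_congr rfl fun k hk => shiftRule_term_eq hn0 hj (mem_Icc.1 hk).1, ← mul_sum,
    ← shiftKernel, shiftKernel_eq (by omega) (by omega) (by omega)]
  push_cast
  rw [hjC]
  field_simp
  ring
end

section
/- Let A, B, φ ∈ ℝ and define f : ℝ → ℝ by f(x) = A·sin(x − φ) + B. Set X = f(π/2) − f(−π/2), Y = 2·f(0) − f(π/2) − f(−π/2), and x₀ = −π/2 − atan2(Y, X), where atan2(Y, X) denotes the argument in (−π, π] of the complex number X + iY (with the convention atan2(0,0) = 0). Then f(x₀) = B − |A|, and f(x₀) ≤ f(x) for all x ∈ ℝ; i.e. x₀ is a global minimum of f. -/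
/-!
The three samples recover the Fourier coefficients of `f`: `X = 2A cos φ` and `Y = -2A sin φ`,
so `X + iY = 2A e^{-iφ}` and its argument `θ` satisfies `cos (θ + φ) = sign A`. Hence
`sin (x₀ - φ) = -cos (θ + φ) = -sign A` and `f x₀ = B - |A|`, the lower bound of `f` given by
`|sin| ≤ 1`.
-/

open Real

theorem Complex.cos_arg_add {z : ℂ} (hz : z ≠ 0) (φ : ℝ) :
    Real.cos (arg z + φ) = (z.re * Real.cos φ - z.im * Real.sin φ) / ‖z‖ := by
  rw [Real.cos_add, cos_arg hz, sin_arg]; ring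

theorem mul_cos_arg_add_eq_abs {A φ X Y : ℝ} (hX : X = 2 * A * cos φ)
    (hY : Y = -(2 * A * sin φ)) : A * cos (Complex.arg (X + Y * Complex.I) + φ) = |A| := by
  rcases eq_or_ne A 0 with rfl | hA
  · simp
  set z : ℂ := X + Y * Complex.I
  have hre : z.re = X := by simp [z]
  have him : z.im = Y := by simp [z]
  have hnorm : ‖z‖ = 2 * |A| := by
    rw [Complex.norm_eq_sqrt_sq_add_sq, ← sqrt_sq (by positivity : 0 ≤ 2 * |A|), hre, him, hX, hY]
    congr 1
    linear_combination (4 * A ^ 2) * sin_sq_add_cos_sq φ - 4 * sq_abs A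
  have hz : z ≠ 0 := norm_ne_zero_iff.mp (by rw [hnorm]; positivity)
  rw [Complex.cos_arg_add hz, hnorm, hre, him, hX, hY]
  field_simp
  linear_combination A ^ 2 * sin_sq_add_cos_sq φ - sq_abs A

theorem neg_abs_le_mul_sin (A t : ℝ) : -|A| ≤ A * sin t := by
  refine neg_le_of_abs_le ?_
  rw [abs_mul]
  exact mul_le_of_le_one_right (abs_nonneg A) (abs_sin_le_one t)

theorem sin_neg_pi_div_two_sub (x : ℝ) : sin (-(π / 2) - x) = -cos x := by
  rw [← neg_add', sin_neg, add_comm, sin_add_pi_div_two]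

/-- Correctness of the Rotosolve update rule (Eq. 14 / Algorithm 1): for
`f(x) = A sin(x − φ) + B`, the point `x₀ = −π/2 − atan2(Y, X)` computed from the samples
`f(0), f(π/2), f(−π/2)` is a global minimiser with value `B − |A|`.
Here `atan2(Y, X)` is the argument in `(−π, π]` of the complex number `X + iY`. -/
theorem stmt8 (A B φ : ℝ) (f : ℝ → ℝ) (hf : ∀ x, f x = A * Real.sin (x - φ) + B)
    (X Y x₀ : ℝ)
    (hX : X = f (Real.pi / 2) - f (-(Real.pi / 2)))
    (hY : Y = 2 * f 0 - f (Real.pi / 2) - f (-(Real.pi / 2)))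
    (hx₀ : x₀ = -(Real.pi / 2) - Complex.arg (X + Y * Complex.I)) :
    f x₀ = B - |A| ∧ ∀ x : ℝ, f x₀ ≤ f x := by
  have hX' : X = 2 * A * cos φ := by
    rw [hX, hf, hf, sin_pi_div_two_sub, sin_neg_pi_div_two_sub]; ring
  have hY' : Y = -(2 * A * sin φ) := by
    rw [hY, hf, hf, hf, zero_sub, sin_neg, sin_pi_div_two_sub, sin_neg_pi_div_two_sub]; ring
  have hval : f x₀ = B - |A| := by
    rw [hf, hx₀, sub_sub, sin_neg_pi_div_two_sub, mul_neg, mul_cos_arg_add_eq_abs hX' hY']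
    ring
  refine ⟨hval, fun x => ?_⟩
  rw [hval, hf]
  linarith [neg_abs_le_mul_sin A (x - φ)]
end

section
/- Let n ≥ 1 and let f : ℝ → ℝ be given by f(x) = Σ_{k=−n}^{n} c_k e^{i k x} with complex coefficients satisfying c_{−k} = conj(c_k) for all k, and assume c_k ≠ 0 for some k ≠ 0. Then the set {x ∈ [0, 2π) : f has a local minimum at x} is finite and has at most n elements. -/
/-!
A local extremum `x` of `f` is a zero of `f'(x) = e^{-inx} P(e^{ix})`, where `P` is a nonzero
polynomial of degree at most `2n`. Hence a period contains at most `2n` critical points, and `f` is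
constant on no open interval, so no point is both a local minimum and a local maximum. Between two
consecutive local minima on the circle the maximum of `f` is attained at a local maximum, so there
are at least as many local maxima as local minima, and together they fit into the `2n` critical
points.
-/

open Set Filter Topology Function Complex Polynomial

lemma IsLocalMin.eventually_isLocalMin_of_isLocalMax {α β : Type*} [TopologicalSpace α]
    [PartialOrder β] {f : α → β} {a : α} (hmin : IsLocalMin f a) (hmax : IsLocalMax f a) :
    ∀ᶠ y in 𝓝 a, IsLocalMin f y := by
  have hconst : ∀ᶠ y in 𝓝 a, f y = f a :=
    (hmin.and hmax).mono fun y hy => le_antisymm hy.2 hy.1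
  filter_upwards [hconst.eventually_nhds, hconst] with y hnear hy
  exact hnear.mono fun z hz => by rw [hz, hy]

lemma exists_isLocalMax_mem_Ioo_of_isLocalMin {f : ℝ → ℝ} {a b : ℝ} (hab : a < b)
    (hf : ContinuousOn f (Icc a b)) (ha : IsLocalMin f a) (hb : IsLocalMin f b) :
    ∃ z ∈ Ioo a b, IsLocalMax f z := by
  obtain ⟨z, hz, hmax⟩ := isCompact_Icc.exists_isMaxOn (nonempty_Icc.2 hab.le) hf
  have of_le : ∀ w ∈ Ioo a b, f z ≤ f w → ∃ z ∈ Ioo a b, IsLocalMax f z := fun w hw hzw =>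
    ⟨w, hw, (isMaxOn_iff.2 fun y hy => (hmax hy).trans hzw).isLocalMax (Icc_mem_nhds hw.1 hw.2)⟩
  -- if the maximum sits at an endpoint, `f` equals it at nearby interior points
  rcases eq_endpoints_or_mem_Ioo_of_mem_Icc hz with rfl | rfl | hz
  · obtain ⟨w, hzw, hw⟩ := ((ha.filter_mono nhdsWithin_le_nhds).and (Ioo_mem_nhdsGT hab)).exists
    exact of_le w hw hzw
  · obtain ⟨w, hzw, hw⟩ := ((hb.filter_mono nhdsWithin_le_nhds).and (Ioo_mem_nhdsLT hab)).exists
    exact of_le w hw hzw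
  · exact of_le z hz le_rfl

lemma toIcoMod_injOn {α : Type*} [AddCommGroup α] [LinearOrder α] [IsOrderedAddMonoid α]
    [Archimedean α] {p : α} (hp : 0 < p) (a b : α) : InjOn (toIcoMod hp a) (Ico b (b + p)) := by
  intro x hx y hy h
  have h' := congrArg (toIcoMod hp b) h
  rwa [toIcoMod_toIcoMod, toIcoMod_toIcoMod, (toIcoMod_eq_self hp).2 hx,
    (toIcoMod_eq_self hp).2 hy] at h'

namespace Function.Periodic

variable {f : ℝ → ℝ} {T : ℝ}

lemma isLocalMin_add_zsmul (hper : Periodic f T) {x : ℝ} (h : IsLocalMin f x) (k : ℤ) :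
    IsLocalMin f (x + k • T) := by
  have h' : IsLocalMin f ((fun y => y - k • T) (x + k • T)) := by simpa using h
  have hcomp := IsLocalMin.comp_continuous (g := fun y => y - k • T) h'
    (continuous_sub_right _).continuousAt
  rwa [comp_def, funext (hper.zsmul k).sub_eq] at hcomp

lemma isLocalMax_add_zsmul (hper : Periodic f T) {x : ℝ} (h : IsLocalMax f x) (k : ℤ) :
    IsLocalMax f (x + k • T) := by
  have h' : IsLocalMax f ((fun y => y - k • T) (x + k • T)) := by simpa using h
  have hcomp := IsLocalMax.comp_continuous (g := fun y => y - k • T) h'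
    (continuous_sub_right _).continuousAt
  rwa [comp_def, funext (hper.zsmul k).sub_eq] at hcomp

lemma ncard_isLocalMin_le_ncard_isLocalMax (hT : 0 < T) (hper : Periodic f T)
    (hcont : Continuous f) (hM : {x ∈ Ico 0 T | IsLocalMin f x}.Finite)
    (hX : {x ∈ Ico 0 T | IsLocalMax f x}.Finite) :
    {x ∈ Ico 0 T | IsLocalMin f x}.ncard ≤ {x ∈ Ico 0 T | IsLocalMax f x}.ncard := by
  set M := {x ∈ Ico 0 T | IsLocalMin f x}
  rcases M.eq_empty_or_nonempty with hMe | hMne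
  · simp [hMe]
  obtain ⟨m₀, hm₀, hm₀_le⟩ := exists_min_image M id hM hMne
  have hnext : ∀ a ∈ M, ∃ z, IsLocalMax f z ∧ a < z ∧ z < m₀ + T ∧ ∀ b ∈ M, a < b → z < b := by
    intro a ha
    by_cases hlast : {b ∈ M | a < b}.Nonempty
    · obtain ⟨b, ⟨hbM, hab⟩, hb_le⟩ := exists_min_image _ id (hM.subset (sep_subset _ _)) hlast
      obtain ⟨z, hz, hzmax⟩ :=
        exists_isLocalMax_mem_Ioo_of_isLocalMin hab hcont.continuousOn ha.2 hbM.2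
      exact ⟨z, hzmax, hz.1, by linarith [hz.2, hbM.1.2, hm₀.1.1],
        fun b' hb' hab' => hz.2.trans_le (hb_le b' ⟨hb', hab'⟩)⟩
    · have hm₀T : IsLocalMin f (m₀ + T) := by simpa using hper.isLocalMin_add_zsmul hm₀.2 1
      obtain ⟨z, hz, hzmax⟩ := exists_isLocalMax_mem_Ioo_of_isLocalMin
        (by linarith [ha.1.2, hm₀.1.1]) hcont.continuousOn ha.2 hm₀T
      exact ⟨z, hzmax, hz.1, hz.2, fun b hb hab => (hlast ⟨b, hb, hab⟩).elim⟩
  choose! r hr_max hr_gt hr_lt hr_next using hnext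
  have hr_mem : ∀ a ∈ M, r a ∈ Ico m₀ (m₀ + T) :=
    fun a ha => ⟨(hm₀_le a ha).trans (hr_gt a ha).le, hr_lt a ha⟩
  refine ncard_le_ncard_of_injOn (fun a => toIcoMod hT 0 (r a))
    (fun a ha => ⟨toIcoMod_mem_Ico' hT _, ?_⟩) (fun a ha a' ha' h => ?_) hX
  · rw [← self_sub_toIcoDiv_zsmul, sub_eq_add_neg, ← neg_zsmul]
    exact hper.isLocalMax_add_zsmul (hr_max a ha) _
  · have hr : r a = r a' := toIcoMod_injOn hT 0 m₀ (hr_mem a ha) (hr_mem a' ha') h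
    -- the chosen local maxima are separated by the local minima
    rcases lt_trichotomy a a' with hlt | heq | hgt
    · linarith [hr_next a ha a' ha' hlt, hr_gt a' ha']
    · exact heq
    · linarith [hr_next a' ha' a ha hgt, hr_gt a ha]

theorem two_mul_ncard_isLocalMin_le (hT : 0 < T) (hper : Periodic f T) (hcont : Continuous f)
    {Z : Set ℝ} (hZ : ∀ a, (Z ∩ Ico a (a + T)).Finite) (hextr : ∀ x, IsLocalExtr f x → x ∈ Z) :
    {x ∈ Ico 0 T | IsLocalMin f x}.Finite ∧
      2 * {x ∈ Ico 0 T | IsLocalMin f x}.ncard ≤ (Z ∩ Ico 0 T).ncard := by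
  set M := {x ∈ Ico 0 T | IsLocalMin f x}
  set X := {x ∈ Ico 0 T | IsLocalMax f x}
  have hZ₀ : (Z ∩ Ico 0 T).Finite := by simpa using hZ 0
  have hMZ : M ⊆ Z ∩ Ico 0 T := fun x hx => ⟨hextr x (Or.inl hx.2), hx.1⟩
  have hXZ : X ⊆ Z ∩ Ico 0 T := fun x hx => ⟨hextr x (Or.inr hx.2), hx.1⟩
  have hdisj : Disjoint M X := by
    refine disjoint_left.2 fun x hxM hxX => ?_
    have hnhds : Z ∩ Ico (x - T / 2) (x - T / 2 + T) ∈ 𝓝 x := by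
      filter_upwards [hxM.2.eventually_isLocalMin_of_isLocalMax hxX.2,
        Ioo_mem_nhds (by linarith : x - T / 2 < x) (by linarith : x < x - T / 2 + T)]
        with y hy hy'
      exact ⟨hextr y (Or.inl hy), Ioo_subset_Ico_self hy'⟩
    exact (hZ _).not_infinite (infinite_of_mem_nhds x hnhds)
  have hMfin : M.Finite := hZ₀.subset hMZ
  have hXfin : X.Finite := hZ₀.subset hXZ
  refine ⟨hMfin, ?_⟩
  calc 2 * M.ncard ≤ M.ncard + X.ncard := by
        linarith [hper.ncard_isLocalMin_le_ncard_isLocalMax hT hcont hMfin hXfin]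
    _ = (M ∪ X).ncard := (ncard_union_eq hdisj hMfin hXfin).symm
    _ ≤ (Z ∩ Ico 0 T).ncard := ncard_le_ncard (union_subset hMZ hXZ) hZ₀

end Function.Periodic

namespace Polynomial

section RootsPreimage

variable {α R : Type*} [CommRing R] [IsDomain R] {P : R[X]} {g : α → R} {s : Set α}

lemma finite_setOf_isRoot_comp_inter (hP : P ≠ 0) (hg : InjOn g s) :
    ({x | P.IsRoot (g x)} ∩ s).Finite := by
  classical
  exact Finite.of_injOn (t := (P.roots.toFinset : Set R)) (fun x hx => by simpa [hP] using hx.1)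
    (hg.mono inter_subset_right) (Finset.finite_toSet _)

lemma ncard_setOf_isRoot_comp_inter_le (hP : P ≠ 0) (hg : InjOn g s) :
    ({x | P.IsRoot (g x)} ∩ s).ncard ≤ P.natDegree := by
  classical
  calc ({x | P.IsRoot (g x)} ∩ s).ncard ≤ (P.roots.toFinset : Set R).ncard :=
        ncard_le_ncard_of_injOn g (fun x hx => by simpa [hP] using hx.1)
          (hg.mono inter_subset_right)
    _ = P.roots.toFinset.card := ncard_coe_finset _
    _ ≤ P.natDegree := (Multiset.toFinset_card_le _).trans (card_roots' P)

end RootsPreimage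

section Shifted

variable {K : Type*} [Field K] (n : ℕ) (a : ℤ → K)

/-- `X ^ n * ∑_{k = -n}^{n} a k * X ^ k`, the numerator of a Laurent polynomial of degree `n`. -/
noncomputable def shiftedSum : K[X] :=
  ∑ k ∈ Finset.Icc (-(n : ℤ)) n, C (a k) * X ^ (k + n).toNat

lemma natDegree_shiftedSum_le : (shiftedSum n a).natDegree ≤ 2 * n := by
  refine natDegree_sum_le_of_forall_le _ _ fun k hk => (natDegree_C_mul_X_pow_le _ _).trans ?_
  simp only [Finset.mem_Icc] at hk
  omega

lemma coeff_shiftedSum {k : ℤ} (hk : k ∈ Finset.Icc (-(n : ℤ)) n) :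
    (shiftedSum n a).coeff (k + n).toNat = a k := by
  simp only [shiftedSum, finsetSum_coeff, coeff_C_mul_X_pow]
  rw [Finset.sum_eq_single_of_mem k hk fun j hj hjk => if_neg ?_, if_pos rfl]
  simp only [Finset.mem_Icc] at hj hk
  omega

lemma shiftedSum_ne_zero (h : ∃ k ∈ Finset.Icc (-(n : ℤ)) n, a k ≠ 0) : shiftedSum n a ≠ 0 := by
  obtain ⟨k, hk, hak⟩ := h
  exact fun h0 => hak (by rw [← coeff_shiftedSum n a hk, h0, coeff_zero])

lemma eval_shiftedSum {z : K} (hz : z ≠ 0) :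
    (shiftedSum n a).eval z = z ^ n * ∑ k ∈ Finset.Icc (-(n : ℤ)) n, a k * z ^ k := by
  rw [shiftedSum, eval_finsetSum, Finset.mul_sum]
  refine Finset.sum_congr rfl fun k hk => ?_
  have hkn : ((k + n).toNat : ℤ) = k + n := Int.toNat_of_nonneg (by simp at hk; omega)
  rw [eval_C_mul, eval_X_pow, ← zpow_natCast, hkn, zpow_add₀ hz, zpow_natCast]
  ring

end Shifted

end Polynomial

lemma hasDerivAt_sum_mul_exp (c : ℤ → ℂ) (s : Finset ℤ) (x : ℝ) :
    HasDerivAt (fun y : ℝ => ∑ k ∈ s, c k * exp (I * k * y))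
      (∑ k ∈ s, c k * (I * k) * exp (I * k * x)) x := by
  refine HasDerivAt.fun_sum fun k _ => ?_
  have h := (((hasDerivAt_id (x : ℂ)).const_mul (I * k)).cexp.const_mul (c k)).comp_ofReal
  simpa [mul_comm, mul_left_comm, mul_assoc] using h

lemma IsLocalExtr.hasDerivAt_ofReal_comp_eq_zero {f : ℝ → ℝ} {x : ℝ} {z : ℂ}
    (hextr : IsLocalExtr f x) (hz : HasDerivAt (fun y => (f y : ℂ)) z x) : z = 0 := by
  have hre : HasDerivAt f z.re x := by
    have h := reCLM.hasFDerivAt.comp_hasDerivAt x hz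
    simp only [comp_def, reCLM_apply, ofReal_re] at h
    exact h
  rw [hz.unique hre.ofReal_comp, hextr.hasDerivAt_eq_zero hre, ofReal_zero]

section TrigPolynomial

variable {f : ℝ → ℝ} {c : ℤ → ℂ}

lemma periodic_of_ofReal_eq_sum_mul_exp {s : Finset ℤ}
    (hf : ∀ x : ℝ, (f x : ℂ) = ∑ k ∈ s, c k * exp (I * k * x)) : Periodic f (2 * Real.pi) := by
  intro x
  suffices (f (x + 2 * Real.pi) : ℂ) = f x by exact_mod_cast this
  rw [hf, hf]
  refine Finset.sum_congr rfl fun k _ => ?_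
  rw [ofReal_add, mul_add, exp_add, ofReal_mul, ofReal_ofNat,
    show I * k * (2 * Real.pi) = k * (2 * Real.pi * I) by ring, exp_int_mul_two_pi_mul_I, mul_one]

lemma continuous_of_ofReal_eq_sum_mul_exp {s : Finset ℤ}
    (hf : ∀ x : ℝ, (f x : ℂ) = ∑ k ∈ s, c k * exp (I * k * x)) : Continuous f := by
  rw [isometry_ofReal.isEmbedding.continuous_iff, comp_def, funext hf]
  fun_prop

lemma isRoot_shiftedSum_of_isLocalExtr {n : ℕ}
    (hf : ∀ x : ℝ, (f x : ℂ) = ∑ k ∈ Finset.Icc (-(n : ℤ)) n, c k * exp (I * k * x)) {x : ℝ}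
    (hx : IsLocalExtr f x) : (shiftedSum n fun k => c k * (I * k)).IsRoot (exp (x * I)) := by
  have hderiv := hasDerivAt_sum_mul_exp c (Finset.Icc (-(n : ℤ)) n) x
  rw [← funext hf] at hderiv
  rw [IsRoot.def, eval_shiftedSum _ _ (exp_ne_zero _)]
  refine mul_eq_zero_of_right _ ((Finset.sum_congr rfl fun k _ => ?_).trans
    (hx.hasDerivAt_ofReal_comp_eq_zero hderiv))
  rw [← exp_int_mul]
  ring_nf

end TrigPolynomial

theorem stmt13_general (n : ℕ) (c : ℤ → ℂ) (f : ℝ → ℝ)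
    (hf : ∀ x : ℝ, (f x : ℂ) = ∑ k ∈ Finset.Icc (-(n : ℤ)) (n : ℤ),
      c k * Complex.exp (Complex.I * (k : ℂ) * (x : ℂ)))
    (hne : ∃ k ∈ Finset.Icc (-(n : ℤ)) (n : ℤ), k ≠ 0 ∧ c k ≠ 0) :
    ({x ∈ Set.Ico (0 : ℝ) (2 * Real.pi) | IsLocalMin f x}.Finite ∧
      {x ∈ Set.Ico (0 : ℝ) (2 * Real.pi) | IsLocalMin f x}.ncard ≤ n) := by
  set P := shiftedSum n fun k => c k * (I * k)
  have hP : P ≠ 0 := by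
    obtain ⟨k, hk, hk0, hck⟩ := hne
    exact shiftedSum_ne_zero n _
      ⟨k, hk, mul_ne_zero hck (mul_ne_zero I_ne_zero (Int.cast_ne_zero.2 hk0))⟩
  have hinj : ∀ a b, b - a ≤ 2 * Real.pi → InjOn (fun t : ℝ => exp (t * I)) (Ico a b) :=
    fun a b hab => Subtype.val_injective.comp_injOn (Circle.exp_injOn_Ico hab)
  obtain ⟨hfin, hcard⟩ := (periodic_of_ofReal_eq_sum_mul_exp hf).two_mul_ncard_isLocalMin_le
    Real.two_pi_pos (continuous_of_ofReal_eq_sum_mul_exp hf)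
    (fun a => finite_setOf_isRoot_comp_inter hP (hinj _ _ (by simp)))
    (fun x hx => isRoot_shiftedSum_of_isLocalExtr hf hx)
  have hroots := (ncard_setOf_isRoot_comp_inter_le hP (hinj 0 (2 * Real.pi) (by simp))).trans
    (natDegree_shiftedSum_le n _)
  exact ⟨hfin, by omega⟩

/-- A nonconstant real trigonometric polynomial of degree at most `n` has at most `n`
local minima in `[0, 2π)` (Appendix B.2). -/
theorem stmt13 (n : ℕ) (hn : 1 ≤ n) (c : ℤ → ℂ)
    (hc : ∀ k : ℤ, c (-k) = starRingEnd ℂ (c k)) (f : ℝ → ℝ)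
    (hf : ∀ x : ℝ, (f x : ℂ) = ∑ k ∈ Finset.Icc (-(n : ℤ)) (n : ℤ),
      c k * Complex.exp (Complex.I * (k : ℂ) * (x : ℂ)))
    (hne : ∃ k ∈ Finset.Icc (-(n : ℤ)) (n : ℤ), k ≠ 0 ∧ c k ≠ 0) :
    ({x ∈ Set.Ico (0 : ℝ) (2 * Real.pi) | IsLocalMin f x}.Finite ∧
      {x ∈ Set.Ico (0 : ℝ) (2 * Real.pi) | IsLocalMin f x}.ncard ≤ n) :=
  stmt13_general n c f hf hne
end
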